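/- arXiv:1702.01947 — 4 statements merged into one kernel-verified Lean document; each statement's English description precedes it below -/
import Mathlib

section
/- Let G : \mathbb{R}\to\mathbb{R}^3 be smooth with |G'(s)| = 1 for all s, satisfying G(s) - sG'(s) = G'(s)\wedge G''(s), and suppose G'(s) \to A^\pm as s \to \pm\infty. If \chi(t,x) = \sqrt{t}\,G(x/\sqrt{t}) for t > 0, then the (improper) integral \int_{\mathbb{R}} \chi(t,x) \wedge \chi_x(t,x)\,dx exists and equals t(A^+ - A^-). -/
open Filter

set_option maxHeartbeats 1000000 in
theorem stmt5 (G : ℝ → Fin 3 → ℝ) (hG : ContDiff ℝ (⊤ : ℕ∞) G)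
    (harc : ∀ s : ℝ, (deriv G s 0) ^ 2 + (deriv G s 1) ^ 2 + (deriv G s 2) ^ 2 = 1)
    (hode : ∀ s : ℝ, G s - s • deriv G s = crossProduct (deriv G s) (deriv (deriv G) s))
    (Ap Am : Fin 3 → ℝ)
    (hAp : Tendsto (deriv G) atTop (nhds Ap))
    (hAm : Tendsto (deriv G) atBot (nhds Am))
    (t : ℝ) (ht : 0 < t) :
    Tendsto (fun R : ℝ => ∫ x in (-R)..R,
        crossProduct (Real.sqrt t • G (x / Real.sqrt t))
          (deriv (fun y : ℝ => Real.sqrt t • G (y / Real.sqrt t)) x))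
      atTop (nhds (t • (Ap - Am))) := by
  set c := Real.sqrt t with hc
  have hc0 : 0 < c := Real.sqrt_pos.mpr ht
  have hG0 : ContDiff ℝ ((⊤ : ℕ∞) : WithTop ℕ∞) G := hG.of_le (by simp)
  have hGd : Differentiable ℝ G := hG.differentiable (by simp)
  have hG1 : ContDiff ℝ ((⊤ : ℕ∞) : WithTop ℕ∞) (deriv G) := (contDiff_infty_iff_deriv.mp hG0).2
  have hGd2 : Differentiable ℝ (deriv G) := hG1.differentiable (by simp)
  have hG2cont : Continuous (deriv (deriv G)) :=
    ((contDiff_infty_iff_deriv.mp hG1).2).continuous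
  -- orthogonality: G' · G'' = 0
  have horth : ∀ s : ℝ,
      deriv G s 0 * deriv (deriv G) s 0 + deriv G s 1 * deriv (deriv G) s 1 +
        deriv G s 2 * deriv (deriv G) s 2 = 0 := by
    intro s
    have hcomp : ∀ i : Fin 3, HasDerivAt (fun u => deriv G u i) (deriv (deriv G) s i) s :=
      hasDerivAt_pi.mp (hGd2 s).hasDerivAt
    have hsum : HasDerivAt
        (fun u => (deriv G u 0) ^ 2 + (deriv G u 1) ^ 2 + (deriv G u 2) ^ 2)
        ((2 : ℕ) * deriv G s 0 ^ 1 * deriv (deriv G) s 0 +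
          (2 : ℕ) * deriv G s 1 ^ 1 * deriv (deriv G) s 1 +
          (2 : ℕ) * deriv G s 2 ^ 1 * deriv (deriv G) s 2) s :=
      (((hcomp 0).pow 2).add ((hcomp 1).pow 2)).add ((hcomp 2).pow 2)
    have hfun : (fun u => (deriv G u 0) ^ 2 + (deriv G u 1) ^ 2 + (deriv G u 2) ^ 2)
        = fun _ : ℝ => (1 : ℝ) := funext harc
    rw [hfun] at hsum
    have h0 := hsum.unique (hasDerivAt_const s (1 : ℝ))
    push_cast at h0
    nlinarith [h0]
  -- key identity: G × G' = G''
  have hkey : ∀ s : ℝ, crossProduct (G s) (deriv G s) = deriv (deriv G) s := by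
    intro s
    have ho := hode s
    have e0 := congrFun ho 0
    have e1 := congrFun ho 1
    have e2 := congrFun ho 2
    simp only [crossProduct, LinearMap.mk₂_apply, Pi.sub_apply, Pi.smul_apply, smul_eq_mul,
      Matrix.cons_val_zero, Matrix.cons_val_one, Matrix.head_cons,
      Matrix.cons_val_two, Matrix.tail_cons] at e0 e1 e2
    have c0 : crossProduct (G s) (deriv G s) 0 = deriv (deriv G) s 0 := by
      simp only [crossProduct, LinearMap.mk₂_apply, Matrix.cons_val_zero]
      linear_combination deriv G s 2 * e1 - deriv G s 1 * e2 +
        deriv (deriv G) s 0 * harc s - deriv G s 0 * horth s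
    have c1 : crossProduct (G s) (deriv G s) 1 = deriv (deriv G) s 1 := by
      simp only [crossProduct, LinearMap.mk₂_apply, Matrix.cons_val_one, Matrix.head_cons,
        Matrix.cons_val_zero]
      linear_combination deriv G s 0 * e2 - deriv G s 2 * e0 +
        deriv (deriv G) s 1 * harc s - deriv G s 1 * horth s
    have c2 : crossProduct (G s) (deriv G s) 2 = deriv (deriv G) s 2 := by
      simp only [crossProduct, LinearMap.mk₂_apply, Matrix.cons_val_two, Matrix.tail_cons,
        Matrix.head_cons]
      linear_combination deriv G s 1 * e0 - deriv G s 0 * e1 +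
        deriv (deriv G) s 2 * harc s - deriv G s 2 * horth s
    funext i
    fin_cases i
    · exact c0
    · exact c1
    · exact c2
  -- derivative of the curve
  have hdiv : ∀ x : ℝ, HasDerivAt (fun y : ℝ => y / c) (1 / c) x := fun x => by
    simpa using (hasDerivAt_id x).div_const c
  have hchi : ∀ x : ℝ,
      HasDerivAt (fun y : ℝ => c • G (y / c)) (deriv G (x / c)) x := by
    intro x
    have h1 : HasDerivAt (fun y : ℝ => G (y / c)) ((1 / c) • deriv G (x / c)) x :=
      (hGd (x / c)).hasDerivAt.scomp x (hdiv x)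
    have h2 := h1.const_smul c
    have : c • (1 / c) • deriv G (x / c) = deriv G (x / c) := by
      rw [smul_smul, mul_one_div_cancel hc0.ne', one_smul]
    rwa [this] at h2
  -- the integrand equals c • G''(x/c)
  have hint : ∀ x : ℝ,
      crossProduct (c • G (x / c)) (deriv (fun y : ℝ => c • G (y / c)) x)
        = c • deriv (deriv G) (x / c) := by
    intro x
    rw [(hchi x).deriv, ← hkey (x / c)]
    simp
  -- antiderivative
  have hF : ∀ x : ℝ,
      HasDerivAt (fun y : ℝ => t • deriv G (y / c)) (c • deriv (deriv G) (x / c)) x := by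
    intro x
    have h1 : HasDerivAt (fun y : ℝ => deriv G (y / c)) ((1 / c) • deriv (deriv G) (x / c)) x :=
      by have := (hGd2 (x / c)).hasDerivAt.scomp x (hdiv x); exact this
    have h2 := h1.const_smul t
    have : t • (1 / c) • deriv (deriv G) (x / c) = c • deriv (deriv G) (x / c) := by
      rw [smul_smul, mul_one_div, hc, Real.div_sqrt]
    rwa [this] at h2
  have hcont : Continuous (fun x : ℝ => c • deriv (deriv G) (x / c)) :=
    (hG2cont.comp (continuous_id.div_const c)).const_smul c
  -- compute the integral
  have hI : ∀ R : ℝ, (∫ x in (-R)..R,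
      crossProduct (c • G (x / c)) (deriv (fun y : ℝ => c • G (y / c)) x))
        = t • deriv G (R / c) - t • deriv G (-R / c) := by
    intro R
    have : (fun x : ℝ =>
        crossProduct (c • G (x / c)) (deriv (fun y : ℝ => c • G (y / c)) x))
        = fun x : ℝ => c • deriv (deriv G) (x / c) := funext hint
    rw [this]
    exact intervalIntegral.integral_eq_sub_of_hasDerivAt (fun x _ => hF x)
      (hcont.intervalIntegrable _ _)
  rw [show (fun R : ℝ => ∫ x in (-R)..R,
      crossProduct (c • G (x / c)) (deriv (fun y : ℝ => c • G (y / c)) x))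
      = fun R : ℝ => t • deriv G (R / c) - t • deriv G (-R / c) from funext hI]
  have h1 : Tendsto (fun R : ℝ => R / c) atTop atTop := tendsto_id.atTop_div_const hc0
  have h2 : Tendsto (fun R : ℝ => -R / c) atTop atBot :=
    tendsto_neg_atTop_atBot.atBot_div_const hc0
  have := (((hAp.comp h1).const_smul t).sub ((hAm.comp h2).const_smul t))
  rwa [← smul_sub] at this
end

section
/- Let m : \mathbb{R}\to\mathbb{C} be bounded and continuously differentiable with m' bounded, and suppose m(x) \to 0 as |x| \to \infty. Fix a > 0 and t \in (0,1]. Then the integral \int_{|y| \le 2} e^{-2i\sqrt{t}y\xi} e^{-iy^2} e^{-ia^2\log 2|y|} m(2\sqrt{t}y)(1-\chi(y))\,dy tends to 0 as |\xi| \to \infty, where \chi is a smooth cutoff with \chi = 0 on [-1,1] and \chi = 1 outside [-2,2]. -/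
open Filter

theorem stmt11 (a : ℝ) (ha : 0 < a) (t : ℝ) (ht : t ∈ Set.Ioc (0 : ℝ) 1)
    (m : ℝ → ℂ) (hm1 : ContDiff ℝ 1 m)
    (hmb : ∃ C : ℝ, ∀ x : ℝ, ‖m x‖ ≤ C)
    (hm'b : ∃ C : ℝ, ∀ x : ℝ, ‖deriv m x‖ ≤ C)
    (hm0 : Tendsto m (cocompact ℝ) (nhds 0))
    (χ : ℝ → ℝ) (hχ : ContDiff ℝ (⊤ : ℕ∞) χ)
    (hχ0 : ∀ y ∈ Set.Icc (-1 : ℝ) 1, χ y = 0)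
    (hχ1 : ∀ y : ℝ, 2 ≤ |y| → χ y = 1) :
    Tendsto (fun ξ : ℝ => ∫ y in (-2 : ℝ)..2,
        Complex.exp (-2 * Complex.I * (Real.sqrt t : ℂ) * (y : ℂ) * (ξ : ℂ))
          * Complex.exp (-Complex.I * (y : ℂ) ^ 2)
          * Complex.exp (-Complex.I * (a : ℂ) ^ 2 * (Real.log (2 * |y|) : ℂ))
          * m (2 * Real.sqrt t * y) * ((1 : ℂ) - (χ y : ℂ)))
      (cocompact ℝ) (nhds 0) := by
  have ht0 : 0 < Real.sqrt t := Real.sqrt_pos.2 ht.1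
  have hπ : (0:ℝ) < Real.pi := Real.pi_pos
  set F : ℝ → ℂ := fun y =>
    Complex.exp (-Complex.I * (y : ℂ) ^ 2)
      * Complex.exp (-Complex.I * (a : ℂ) ^ 2 * (Real.log (2 * |y|) : ℂ))
      * m (2 * Real.sqrt t * y) * ((1 : ℂ) - (χ y : ℂ)) with hF
  set g : ℝ → ℂ := (Set.Ioc (-2:ℝ) 2).indicator F with hg
  have key : ∀ ξ : ℝ, (∫ y in (-2 : ℝ)..2,
        Complex.exp (-2 * Complex.I * (Real.sqrt t : ℂ) * (y : ℂ) * (ξ : ℂ))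
          * Complex.exp (-Complex.I * (y : ℂ) ^ 2)
          * Complex.exp (-Complex.I * (a : ℂ) ^ 2 * (Real.log (2 * |y|) : ℂ))
          * m (2 * Real.sqrt t * y) * ((1 : ℂ) - (χ y : ℂ)))
      = FourierTransform.fourier g (Real.sqrt t * ξ / Real.pi) := by
    intro ξ
    rw [Real.fourier_real_eq_integral_exp_smul,
      intervalIntegral.integral_of_le (by norm_num : (-2:ℝ) ≤ 2),
      ← MeasureTheory.integral_indicator measurableSet_Ioc]
    congr 1
    funext y
    by_cases hy : y ∈ Set.Ioc (-2:ℝ) 2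
    · rw [Set.indicator_of_mem hy, hg, Set.indicator_of_mem hy, hF, smul_eq_mul]
      have hr : (-2 * Real.pi * y * (Real.sqrt t * ξ / Real.pi)) = -2 * Real.sqrt t * y * ξ := by
        field_simp
      have hexp : Complex.exp (((-2 * Real.pi * y * (Real.sqrt t * ξ / Real.pi) : ℝ) : ℂ)
            * Complex.I)
          = Complex.exp (-2 * Complex.I * (Real.sqrt t : ℂ) * (y : ℂ) * (ξ : ℂ)) := by
        rw [hr]; congr 1; push_cast; ring
      rw [hexp]; ring
    · rw [Set.indicator_of_notMem hy, hg, Set.indicator_of_notMem hy, smul_zero]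
  simp_rw [key]
  have hcc : Tendsto (fun ξ : ℝ => Real.sqrt t * ξ / Real.pi) (cocompact ℝ) (cocompact ℝ) := by
    have hne : Real.sqrt t / Real.pi ≠ 0 := by positivity
    have h := (Homeomorph.mulLeft₀ (Real.sqrt t / Real.pi) hne).map_cocompact
    nth_rewrite 2 [← h]
    refine tendsto_map.congr fun ξ => ?_
    show Real.sqrt t / Real.pi * ξ = Real.sqrt t * ξ / Real.pi
    ring
  exact (Real.zero_at_infty_fourier g).comp hcc
end

section
/- Let f : \mathbb{R}\to\mathbb{C} be continuous, bounded, supported in \{|r| \ge 1\}, with f(r) \to 0 as r \to +\infty. Suppose additionally that f is C^2 on its support with f', f'' bounded and f'(r), f''(r) \to 0 as r \to +\infty. Then J_\eta := \int_{\mathbb{R}} e^{-is^2} f(s+\eta)\,ds \to 0 as \eta \to +\infty. -/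
/-!
Write `chirp s = e^{-is²}`; since `chirp' s = -2is · chirp s`, integrating by parts twice bounds
`∫_a^b chirp · g` by `4 sup(|g|, |g'|, |g''|) / m` on any interval where `|s| ≥ m ≥ 1`, and by
`10 sup(|g|, |g'|, |g''|)` on any interval containing `[-1, 1]`. For `g = f(· + η)` the range
`s ≤ -η/2` has `|s| ≥ η/2` and contributes `O(1/η)`, while on `s ≥ -η/2` the point `s + η ≥ η/2`
lies where `f, f', f''` are small. These bounds are uniform in the truncation `R`, so they pass
to the limit `J η`.
-/

open Complex Set MeasureTheory

theorem Continuous.eq_zero_of_abs_le_one {E : Type*} [TopologicalSpace E] [T2Space E] [Zero E]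
    {f : ℝ → E} (hf : Continuous f) (h : ∀ r, |r| < 1 → f r = 0) (r : ℝ) (hr : |r| ≤ 1) :
    f r = 0 := by
  have h' := EqOn.closure (fun r (hr : r ∈ Ioo (-1 : ℝ) 1) => h r (abs_lt.2 hr)) hf
    continuous_const
  rw [closure_Ioo (by norm_num)] at h'
  exact h' (abs_le.1 hr)

noncomputable def chirp (s : ℝ) : ℂ := cexp (-I * (s : ℂ) ^ 2)

theorem norm_chirp (s : ℝ) : ‖chirp s‖ = 1 := by
  simp [chirp, norm_exp, sq]

theorem continuous_chirp : Continuous chirp := by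
  unfold chirp; fun_prop

theorem hasDerivAt_chirp (s : ℝ) : HasDerivAt chirp (chirp s * (-2 * I * s)) s := by
  have h : HasDerivAt chirp _ s := ((hasDerivAt_pow 2 (s : ℂ)).comp_ofReal.const_mul (-I)).cexp
  refine h.congr_deriv ?_
  simp only [chirp]; push_cast; ring

/-- Since `chirp' s = -2 I s · chirp s`, the term `chirp · I / 2 · g / s` differentiates to
`chirp · g` up to an error `chirp · O(g' / s + g / s²)`; the second term integrates the `1 / s`
part of that error by parts once more, leaving `chirpRemainder = O(1 / s²)`. -/
noncomputable def chirpPrimitive (g g₁ : ℝ → ℂ) (s : ℝ) : ℂ :=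
  chirp s * (I / 2 * (g s / s) + (g₁ s / s ^ 2 - g s / s ^ 3) / 4)

noncomputable def chirpRemainder (g g₁ g₂ : ℝ → ℂ) (s : ℝ) : ℂ :=
  g₂ s / s ^ 2 - 3 * g₁ s / s ^ 3 + 3 * g s / s ^ 4

theorem hasDerivAt_chirpPrimitive {g g₁ g₂ : ℝ → ℂ} {s : ℝ} (hs : s ≠ 0)
    (hg₁ : HasDerivAt g (g₁ s) s) (hg₂ : HasDerivAt g₁ (g₂ s) s) :
    HasDerivAt (chirpPrimitive g g₁)
      (chirp s * g s + chirp s * chirpRemainder g g₁ g₂ s / 4) s := by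
  have hs' : (s : ℂ) ≠ 0 := ofReal_ne_zero.2 hs
  have hid : HasDerivAt (fun t : ℝ => (t : ℂ)) 1 s := hasDerivAt_id s |>.ofReal_comp
  have hpow (n : ℕ) : HasDerivAt (fun t : ℝ => (t : ℂ) ^ n) (n * (s : ℂ) ^ (n - 1)) s :=
    (hasDerivAt_pow n (s : ℂ)).comp_ofReal
  have h : HasDerivAt (chirpPrimitive g g₁) _ s := (hasDerivAt_chirp s).mul
    (((hg₁.div hid hs').const_mul (I / 2)).add (((hg₂.div (hpow 2) (pow_ne_zero 2 hs')).sub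
      (hg₁.div (hpow 3) (pow_ne_zero 3 hs'))).div_const 4))
  refine h.congr_deriv ?_
  rw [chirpRemainder]
  field_simp
  push_cast
  ring_nf
  rw [I_sq]
  ring

theorem norm_div_ofReal_pow_le {z : ℂ} {s ε : ℝ} {j k : ℕ} (hs : 1 ≤ |s|) (hz : ‖z‖ ≤ ε)
    (hjk : j ≤ k) : ‖z / (s : ℂ) ^ k‖ ≤ ε / |s| ^ j := by
  rw [norm_div, norm_pow, norm_real, Real.norm_eq_abs]
  exact div_le_div₀ ((norm_nonneg z).trans hz) hz (by positivity) (pow_le_pow_right₀ hs hjk)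

theorem norm_chirpPrimitive_le {g g₁ : ℝ → ℂ} {s ε : ℝ} (hs : 1 ≤ |s|) (hg : ‖g s‖ ≤ ε)
    (hg₁ : ‖g₁ s‖ ≤ ε) : ‖chirpPrimitive g g₁ s‖ ≤ ε / |s| := by
  have h1 := norm_div_ofReal_pow_le (j := 1) (k := 1) hs hg le_rfl
  have h2 := norm_div_ofReal_pow_le (j := 1) (k := 2) hs hg₁ (by norm_num)
  have h3 := norm_div_ofReal_pow_le (j := 1) (k := 3) hs hg (by norm_num)
  simp only [pow_one] at h1 h2 h3
  calc ‖chirpPrimitive g g₁ s‖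
      ≤ 1 / 2 * ‖g s / s‖ + (‖g₁ s / (s : ℂ) ^ 2‖ + ‖g s / (s : ℂ) ^ 3‖) / 4 := by
        rw [chirpPrimitive, norm_mul, norm_chirp, one_mul]
        refine (norm_add_le _ _).trans (add_le_add (le_of_eq ?_) ?_)
        · simp
        · rw [norm_div, show ‖(4 : ℂ)‖ = 4 by norm_num]
          gcongr
          exact norm_sub_le _ _
    _ ≤ 1 / 2 * (ε / |s|) + (ε / |s| + ε / |s|) / 4 := by gcongr
    _ = ε / |s| := by ring

theorem norm_chirpRemainder_le {g g₁ g₂ : ℝ → ℂ} {s ε : ℝ} (hs : 1 ≤ |s|) (hg : ‖g s‖ ≤ ε)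
    (hg₁ : ‖g₁ s‖ ≤ ε) (hg₂ : ‖g₂ s‖ ≤ ε) : ‖chirpRemainder g g₁ g₂ s‖ ≤ 7 * ε * (s ^ 2)⁻¹ := by
  have h3 : ∀ {z : ℂ}, ‖z‖ ≤ ε → ‖3 * z‖ ≤ 3 * ε := fun hz => by
    rw [norm_mul]; norm_num; linarith
  have e2 := norm_div_ofReal_pow_le (j := 2) (k := 2) hs hg₂ le_rfl
  have e3 := norm_div_ofReal_pow_le (j := 2) (k := 3) hs (h3 hg₁) (by norm_num)
  have e4 := norm_div_ofReal_pow_le (j := 2) (k := 4) hs (h3 hg) (by norm_num)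
  rw [sq_abs] at e2 e3 e4
  calc ‖chirpRemainder g g₁ g₂ s‖
      ≤ ‖g₂ s / (s : ℂ) ^ 2‖ + ‖3 * g₁ s / (s : ℂ) ^ 3‖ + ‖3 * g s / (s : ℂ) ^ 4‖ :=
        (norm_add_le _ _).trans (add_le_add_left (norm_sub_le _ _) _)
    _ ≤ ε / s ^ 2 + 3 * ε / s ^ 2 + 3 * ε / s ^ 2 := by gcongr
    _ = 7 * ε * (s ^ 2)⁻¹ := by ring

theorem integral_inv_sq_le {a b m : ℝ} (hab : a ≤ b) (hm : 0 < m)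
    (hmem : ∀ s ∈ Icc a b, m ≤ |s|) : ∫ s in a..b, (s ^ 2)⁻¹ ≤ m⁻¹ := by
  have h0 : (0 : ℝ) ∉ uIcc a b := by
    rw [uIcc_of_le hab]
    intro h
    simpa [hm.not_ge] using hmem 0 h
  have h := integral_zpow (a := a) (b := b) (n := -2) (Or.inr ⟨by norm_num, h0⟩)
  norm_num at h
  rw [h, div_neg, div_one, neg_sub]
  have ha := hmem a ⟨le_rfl, hab⟩
  have hb := hmem b ⟨hab, le_rfl⟩
  rcases lt_or_gt_of_ne (fun h => h0 (h ▸ left_mem_uIcc) : a ≠ 0) with ha0 | ha0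
  · have hb0 : b < 0 := by
      by_contra! hb0
      exact h0 ⟨by simp [ha0.le], by simp [hb0]⟩
    rw [abs_of_neg hb0] at hb
    have : (-b)⁻¹ ≤ m⁻¹ := inv_anti₀ hm hb
    have : a⁻¹ < 0 := inv_lt_zero.2 ha0
    rw [inv_neg] at *
    linarith
  · rw [abs_of_pos ha0] at ha
    have : a⁻¹ ≤ m⁻¹ := inv_anti₀ hm ha
    have : 0 < b⁻¹ := inv_pos.2 (ha0.trans_le hab)
    linarith

theorem integral_chirp_mul_eq {g g₁ g₂ : ℝ → ℂ} {a b : ℝ} (h0 : ∀ s ∈ uIcc a b, s ≠ 0)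
    (hg₁ : ∀ s ∈ uIcc a b, HasDerivAt g (g₁ s) s) (hg₂ : ∀ s ∈ uIcc a b, HasDerivAt g₁ (g₂ s) s)
    (hg₂c : ContinuousOn g₂ (uIcc a b)) :
    ∫ s in a..b, chirp s * g s = chirpPrimitive g g₁ b - chirpPrimitive g g₁ a
      - (∫ s in a..b, chirp s * chirpRemainder g g₁ g₂ s) / 4 := by
  have hgc : ContinuousOn g (uIcc a b) := fun s hs => (hg₁ s hs).continuousAt.continuousWithinAt
  have hg₁c : ContinuousOn g₁ (uIcc a b) := fun s hs => (hg₂ s hs).continuousAt.continuousWithinAt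
  have hpow (n : ℕ) : ContinuousOn (fun s : ℝ => (s : ℂ) ^ n) (uIcc a b) := by fun_prop
  have hpow0 (n : ℕ) : ∀ s ∈ uIcc a b, (s : ℂ) ^ n ≠ 0 := fun s hs =>
    pow_ne_zero n (ofReal_ne_zero.2 (h0 s hs))
  have hint : IntervalIntegrable (fun s => chirp s * g s) volume a b :=
    (continuous_chirp.continuousOn.mul hgc).intervalIntegrable
  have hintR : IntervalIntegrable (fun s => chirp s * chirpRemainder g g₁ g₂ s) volume a b := by
    refine (continuous_chirp.continuousOn.mul ?_).intervalIntegrable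
    exact ((hg₂c.div (hpow 2) (hpow0 2)).sub
      ((continuousOn_const.mul hg₁c).div (hpow 3) (hpow0 3))).add
        ((continuousOn_const.mul hgc).div (hpow 4) (hpow0 4))
  have hFTC := intervalIntegral.integral_eq_sub_of_hasDerivAt
    (fun s hs => hasDerivAt_chirpPrimitive (h0 s hs) (hg₁ s hs) (hg₂ s hs))
    (hint.add (hintR.div_const 4))
  rw [intervalIntegral.integral_add hint (hintR.div_const 4), intervalIntegral.integral_div] at hFTC
  rw [← hFTC]
  ring

theorem norm_integral_chirp_mul_le_of_Icc {g g₁ g₂ : ℝ → ℂ} {a b m ε : ℝ} (hab : a ≤ b)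
    (hm : 1 ≤ m) (hmem : ∀ s ∈ Icc a b, m ≤ |s|)
    (hg₁ : ∀ s ∈ Icc a b, HasDerivAt g (g₁ s) s) (hg₂ : ∀ s ∈ Icc a b, HasDerivAt g₁ (g₂ s) s)
    (hg₂c : ContinuousOn g₂ (Icc a b))
    (hbound : ∀ s ∈ Icc a b, ‖g s‖ ≤ ε ∧ ‖g₁ s‖ ≤ ε ∧ ‖g₂ s‖ ≤ ε) :
    ‖∫ s in a..b, chirp s * g s‖ ≤ 4 * ε / m := by
  have hm0 : 0 < m := one_pos.trans_le hm
  have hε : 0 ≤ ε := (norm_nonneg _).trans (hbound a ⟨le_rfl, hab⟩).1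
  have hone : ∀ s ∈ Icc a b, 1 ≤ |s| := fun s hs => hm.trans (hmem s hs)
  have hs0 : ∀ s ∈ Icc a b, s ≠ 0 := fun s hs h => by
    linarith [hone s hs, show |s| = 0 by simp [h]]
  have hF : ∀ s ∈ Icc a b, ‖chirpPrimitive g g₁ s‖ ≤ ε / m := fun s hs =>
    (norm_chirpPrimitive_le (hone s hs) (hbound s hs).1 (hbound s hs).2.1).trans
      (div_le_div_of_nonneg_left hε hm0 (hmem s hs))
  have hR : ‖∫ s in a..b, chirp s * chirpRemainder g g₁ g₂ s‖ ≤ 7 * ε * m⁻¹ := by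
    have hcont : ContinuousOn (fun s : ℝ => 7 * ε * (s ^ 2)⁻¹) (Icc a b) :=
      continuousOn_const.mul ((continuousOn_id.pow 2).inv₀ fun s hs => pow_ne_zero 2 (hs0 s hs))
    refine (intervalIntegral.norm_integral_le_of_norm_le hab (ae_of_all _ fun s hs => ?_)
      (hcont.intervalIntegrable_of_Icc hab)).trans ?_
    · obtain ⟨hg, hg₁, hg₂⟩ := hbound s (Ioc_subset_Icc_self hs)
      rw [norm_mul, norm_chirp, one_mul]
      exact norm_chirpRemainder_le (hone s (Ioc_subset_Icc_self hs)) hg hg₁ hg₂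
    · rw [intervalIntegral.integral_const_mul]
      exact mul_le_mul_of_nonneg_left (integral_inv_sq_le hab hm0 hmem) (by positivity)
  rw [← uIcc_of_le hab] at hs0 hg₁ hg₂ hg₂c
  rw [integral_chirp_mul_eq hs0 hg₁ hg₂ hg₂c]
  calc _ ≤ ‖chirpPrimitive g g₁ b‖ + ‖chirpPrimitive g g₁ a‖
        + ‖∫ s in a..b, chirp s * chirpRemainder g g₁ g₂ s‖ / 4 := by
        refine (norm_sub_le _ _).trans (add_le_add (norm_sub_le _ _) (le_of_eq ?_))
        rw [norm_div, show ‖(4 : ℂ)‖ = 4 by norm_num]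
    _ ≤ ε / m + ε / m + 7 * ε * m⁻¹ / 4 := by
        gcongr
        exacts [hF b ⟨hab, le_rfl⟩, hF a ⟨le_rfl, hab⟩]
    _ = 15 / 4 * (ε / m) := by ring
    _ ≤ 4 * ε / m := by
        rw [mul_div_assoc]
        exact mul_le_mul_of_nonneg_right (by norm_num) (div_nonneg hε hm0.le)

open Filter Topology in
theorem norm_integral_chirp_mul_le {g g₁ g₂ : ℝ → ℂ} {a b m ε : ℝ} (hab : a < b) (hm : 1 ≤ m)
    (hmem : ∀ s ∈ Ioo a b, m ≤ |s|) (hg : Continuous g)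
    (hg₁ : ∀ s ∈ Ioo a b, HasDerivAt g (g₁ s) s) (hg₂ : ∀ s ∈ Ioo a b, HasDerivAt g₁ (g₂ s) s)
    (hg₂c : ContinuousOn g₂ (Ioo a b))
    (hbound : ∀ s ∈ Ioo a b, ‖g s‖ ≤ ε ∧ ‖g₁ s‖ ≤ ε ∧ ‖g₂ s‖ ≤ ε) :
    ‖∫ s in a..b, chirp s * g s‖ ≤ 4 * ε / m := by
  -- The derivatives exist only inside `(a, b)`: integrate over `[a + δ, b - δ]` and let `δ → 0`.
  have hint : ∀ x y, IntervalIntegrable (fun s => chirp s * g s) volume x y := fun _ _ =>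
    (continuous_chirp.mul hg).intervalIntegrable _ _
  have hprim := intervalIntegral.continuous_primitive hint a
  have hlim : Tendsto (fun δ => ∫ s in (a + δ)..(b - δ), chirp s * g s) (𝓝[>] 0)
      (𝓝 (∫ s in a..b, chirp s * g s)) := by
    have hc : Continuous fun δ : ℝ =>
        (∫ s in a..(b - δ), chirp s * g s) - ∫ s in a..(a + δ), chirp s * g s :=
      (hprim.comp (continuous_const.sub continuous_id)).sub
        (hprim.comp (continuous_const.add continuous_id))
    have h := hc.tendsto 0
    simp only [sub_zero, add_zero, intervalIntegral.integral_same] at h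
    exact (h.congr fun δ => intervalIntegral.integral_interval_sub_left (hint _ _) (hint _ _))
      |>.mono_left nhdsWithin_le_nhds
  refine le_of_tendsto hlim.norm (eventually_of_mem (Ioo_mem_nhdsGT (half_pos (sub_pos.2 hab)))
    fun δ hδ => ?_)
  have hsub : Icc (a + δ) (b - δ) ⊆ Ioo a b :=
    Icc_subset_Ioo (by linarith [hδ.1]) (by linarith [hδ.1])
  exact norm_integral_chirp_mul_le_of_Icc (by linarith [hδ.2]) hm (fun s hs => hmem s (hsub hs))
    (fun s hs => hg₁ s (hsub hs)) (fun s hs => hg₂ s (hsub hs)) (hg₂c.mono hsub)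
    (fun s hs => hbound s (hsub hs))

theorem norm_integral_chirp_mul_le_ten_mul {g g₁ g₂ : ℝ → ℂ} {a b ε : ℝ} (ha : a < -1) (hb : 1 < b)
    (hg : Continuous g) (hg₁ : ∀ s ∈ Ioo a b, HasDerivAt g (g₁ s) s)
    (hg₂ : ∀ s ∈ Ioo a b, HasDerivAt g₁ (g₂ s) s) (hg₂c : ContinuousOn g₂ (Ioo a b))
    (hbound : ∀ s ∈ Ioo a b, ‖g s‖ ≤ ε ∧ ‖g₁ s‖ ≤ ε ∧ ‖g₂ s‖ ≤ ε) :
    ‖∫ s in a..b, chirp s * g s‖ ≤ 10 * ε := by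
  have hint : ∀ x y, IntervalIntegrable (fun s => chirp s * g s) volume x y := fun _ _ =>
    (continuous_chirp.mul hg).intervalIntegrable _ _
  have ibp : ∀ {x y}, x < y → a ≤ x → y ≤ b → (∀ s ∈ Ioo x y, 1 ≤ |s|) →
      ‖∫ s in x..y, chirp s * g s‖ ≤ 4 * ε := fun hxy hax hyb hmem => by
    have hsub : Ioo _ _ ⊆ Ioo a b := Ioo_subset_Ioo hax hyb
    simpa using norm_integral_chirp_mul_le hxy le_rfl hmem hg (fun s hs => hg₁ s (hsub hs))
      (fun s hs => hg₂ s (hsub hs)) (hg₂c.mono hsub) (fun s hs => hbound s (hsub hs))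
  have hleft := ibp ha le_rfl (by linarith) fun s hs => le_abs.2 (Or.inr (by linarith [hs.2]))
  have hright := ibp hb (by linarith) le_rfl fun s hs => le_abs.2 (Or.inl hs.1.le)
  have hmid : ‖∫ s in (-1 : ℝ)..1, chirp s * g s‖ ≤ 2 * ε := by
    have h := intervalIntegral.norm_integral_le_of_norm_le_const (a := -1) (b := 1)
      (f := fun s => chirp s * g s) (C := ε) fun s hs => by
        rw [uIoc_of_le (by norm_num)] at hs
        rw [norm_mul, norm_chirp, one_mul]
        exact (hbound s ⟨by linarith [hs.1], by linarith [hs.2]⟩).1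
    norm_num at h
    linarith
  rw [← intervalIntegral.integral_add_adjacent_intervals (hint a (-1)) (hint (-1) b),
    ← intervalIntegral.integral_add_adjacent_intervals (hint (-1) 1) (hint 1 b)]
  calc _ ≤ ‖∫ s in a..(-1), chirp s * g s‖ + (‖∫ s in (-1 : ℝ)..1, chirp s * g s‖
        + ‖∫ s in (1 : ℝ)..b, chirp s * g s‖) :=
        (norm_add_le _ _).trans (add_le_add le_rfl (norm_add_le _ _))
    _ ≤ 10 * ε := by linarith

theorem norm_integral_chirp_mul_comp_add_le {f f₁ f₂ : ℝ → ℂ} {M ε η R : ℝ} (hf : Continuous f)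
    (hzero : ∀ r, |r| ≤ 1 → f r = 0) (hf₁ : ∀ r, 1 < |r| → HasDerivAt f (f₁ r) r)
    (hf₂ : ∀ r, 1 < |r| → HasDerivAt f₁ (f₂ r) r) (hf₂c : ContinuousOn f₂ {r | 1 < |r|})
    (hM : ∀ r, ‖f r‖ ≤ M ∧ ‖f₁ r‖ ≤ M ∧ ‖f₂ r‖ ≤ M)
    (hε : ∀ r, η / 2 ≤ r → ‖f r‖ ≤ ε ∧ ‖f₁ r‖ ≤ ε ∧ ‖f₂ r‖ ≤ ε) (hη : 2 < η) (hR : η + 1 < R) :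
    ‖∫ s in (-R)..R, chirp s * f (s + η)‖ ≤ 16 * M / η + 10 * ε := by
  have hg : Continuous fun s => f (s + η) := hf.comp (continuous_add_const η)
  have hint : ∀ x y, IntervalIntegrable (fun s => chirp s * f (s + η)) volume x y := fun _ _ =>
    (continuous_chirp.mul hg).intervalIntegrable _ _
  have hg₁ : ∀ s, 1 < |s + η| → HasDerivAt (fun s => f (s + η)) (f₁ (s + η)) s := fun s hs =>
    (hf₁ _ hs).comp_add_const s η
  have hg₂ : ∀ s, 1 < |s + η| → HasDerivAt (fun s => f₁ (s + η)) (f₂ (s + η)) s := fun s hs =>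
    (hf₂ _ hs).comp_add_const s η
  have hg₂c : ContinuousOn (fun s => f₂ (s + η)) {s | 1 < |s + η|} :=
    hf₂c.comp (continuous_add_const η).continuousOn fun _ hs => hs
  have far : ∀ {x y}, x < y → (∀ s ∈ Ioo x y, η / 2 ≤ |s| ∧ 1 < |s + η|) →
      ‖∫ s in x..y, chirp s * f (s + η)‖ ≤ 8 * M / η := fun hxy hmem => by
    have h := norm_integral_chirp_mul_le hxy (by linarith) (fun s hs => (hmem s hs).1) hg
      (fun s hs => hg₁ s (hmem s hs).2) (fun s hs => hg₂ s (hmem s hs).2)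
      (hg₂c.mono fun s hs => (hmem s hs).2) (fun s _ => hM (s + η))
    exact h.trans_eq (by ring)
  have hleft := far (x := -R) (y := -1 - η) (by linarith) fun s hs =>
    ⟨le_abs.2 (Or.inr (by linarith [hs.2])), lt_abs.2 (Or.inr (by linarith [hs.2]))⟩
  have hmid : ∫ s in (-1 - η)..(1 - η), chirp s * f (s + η) = 0 := by
    refine (intervalIntegral.integral_congr fun s hs => ?_).trans intervalIntegral.integral_zero
    rw [uIcc_of_le (by linarith)] at hs
    simp [hzero (s + η) (abs_le.2 ⟨by linarith [hs.1], by linarith [hs.2]⟩)]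
  have hright := far (x := 1 - η) (y := -η / 2) (by linarith) fun s hs =>
    ⟨le_abs.2 (Or.inr (by linarith [hs.2])), lt_abs.2 (Or.inl (by linarith [hs.1]))⟩
  have hU : ∀ s ∈ Ioo (-η / 2) R, 1 < |s + η| := fun s hs => lt_abs.2 (Or.inl (by linarith [hs.1]))
  have hnear : ‖∫ s in (-η / 2)..R, chirp s * f (s + η)‖ ≤ 10 * ε :=
    norm_integral_chirp_mul_le_ten_mul (by linarith) (by linarith) hg
      (fun s hs => hg₁ s (hU s hs)) (fun s hs => hg₂ s (hU s hs)) (hg₂c.mono hU)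
      (fun s hs => hε (s + η) (by linarith [hs.1]))
  rw [← intervalIntegral.integral_add_adjacent_intervals (hint _ (-1 - η)) (hint _ R),
    ← intervalIntegral.integral_add_adjacent_intervals (hint _ (1 - η)) (hint _ R),
    ← intervalIntegral.integral_add_adjacent_intervals (hint _ (-η / 2)) (hint _ R), hmid, zero_add]
  calc _ ≤ 8 * M / η + (8 * M / η + 10 * ε) := (norm_add_le _ _).trans
        (add_le_add hleft ((norm_add_le _ _).trans (add_le_add hright hnear)))
    _ = 16 * M / η + 10 * ε := by ring

open Filter

theorem stmt12 (f : ℝ → ℂ) (hf : Continuous f)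
    (hfb : ∃ C : ℝ, ∀ r : ℝ, ‖f r‖ ≤ C)
    (hsupp : ∀ r : ℝ, |r| < 1 → f r = 0)
    (hf0 : Tendsto f atTop (nhds 0))
    (hf2 : ContDiffOn ℝ 2 f {r : ℝ | 1 ≤ |r|})
    (hf'b : ∃ C : ℝ, ∀ r : ℝ, ‖deriv f r‖ ≤ C)
    (hf''b : ∃ C : ℝ, ∀ r : ℝ, ‖deriv (deriv f) r‖ ≤ C)
    (hf'0 : Tendsto (deriv f) atTop (nhds 0))
    (hf''0 : Tendsto (deriv (deriv f)) atTop (nhds 0))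
    (J : ℝ → ℂ)
    (hJ : ∀ η : ℝ, Tendsto
      (fun R : ℝ => ∫ s in (-R)..R, Complex.exp (-Complex.I * (s : ℂ) ^ 2) * f (s + η))
      atTop (nhds (J η))) :
    Tendsto J atTop (nhds 0) := by
  have hU : IsOpen {r : ℝ | 1 < |r|} := isOpen_lt continuous_const continuous_abs
  have hC2 : ContDiffOn ℝ 2 f {r | 1 < |r|} :=
    hf2.mono fun _ hr => le_of_lt (show (1 : ℝ) < _ from hr)
  have hC1 : ContDiffOn ℝ 1 (deriv f) {r | 1 < |r|} := hC2.deriv_of_isOpen hU (by norm_num)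
  obtain ⟨M, hM⟩ : ∃ M, ∀ r, ‖f r‖ ≤ M ∧ ‖deriv f r‖ ≤ M ∧ ‖deriv (deriv f) r‖ ≤ M := by
    obtain ⟨C₀, h₀⟩ := hfb
    obtain ⟨C₁, h₁⟩ := hf'b
    obtain ⟨C₂, h₂⟩ := hf''b
    exact ⟨max C₀ (max C₁ C₂), fun r => ⟨(h₀ r).trans (by simp), (h₁ r).trans (by simp),
      (h₂ r).trans (by simp)⟩⟩
  rw [NormedAddGroup.tendsto_nhds_zero]
  intro ε hε
  have hsmall (u : ℝ → ℂ) (hu : Tendsto u atTop (nhds 0)) : ∀ᶠ r in atTop, ‖u r‖ ≤ ε / 20 := by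
    simpa using hu.norm.eventually (ge_mem_nhds (by simp; positivity))
  obtain ⟨N, hN⟩ := eventually_atTop.1 ((hsmall _ hf0).and ((hsmall _ hf'0).and (hsmall _ hf''0)))
  filter_upwards [eventually_gt_atTop 2, eventually_ge_atTop (2 * N),
    eventually_gt_atTop (32 * M / ε)] with η hη hηN hηM
  have hJη : ‖J η‖ ≤ 16 * M / η + 10 * (ε / 20) :=
    le_of_tendsto (hJ η).norm ((eventually_gt_atTop (η + 1)).mono fun R hR =>
      norm_integral_chirp_mul_comp_add_le hf (hf.eq_zero_of_abs_le_one hsupp)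
        (fun r hr => ((hC2.contDiffAt (hU.mem_nhds hr)).differentiableAt (by norm_num)).hasDerivAt)
        (fun r hr => ((hC1.contDiffAt (hU.mem_nhds hr)).differentiableAt (by norm_num)).hasDerivAt)
        (hC1.continuousOn_deriv_of_isOpen hU le_rfl) hM (fun r hr => hN r (by linarith)) hη hR)
  have hMη : 16 * M / η < ε / 2 := by
    rw [div_lt_iff₀ hε] at hηM
    rw [div_lt_iff₀ (by linarith)]
    linarith
  linarith
end

section
/- Suppose T, N : \mathbb{R} \to \mathbb{C}^3 are differentiable with T real-valued, satisfying T'(x) = \Re(\overline{\psi(x)} N(x)) and N'(x) = -\psi(x) T(x) for some continuous \psi : \mathbb{R}\to\mathbb{C}, and suppose at some point x_0 the triple (T(x_0), \Re N(x_0), \Im N(x_0)) is orthonormal in \mathbb{R}^3. Then (T(x), \Re N(x), \Im N(x)) is orthonormal for every x \in \mathbb{R}. -/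
/-!
Write `R = Re N`, `I = Im N`, `p = Re ψ`, `q = Im ψ`. The system reads `T' = p R + q I`,
`R' = -p T`, `I' = -q T`: the frame `(T, R, I)` moves by a skew-symmetric matrix `A`, so its
Gram matrix `G` satisfies `G' = A G - G A`. For `S = G - 1` this gives
`(tr S²)' = 2 tr (S A S - S S A) = 0` by cyclicity of the trace, hence `tr S²` is constant,
and it vanishes at `x₀`.
-/

/-- `(T, Re N, Im N)` is an orthonormal triple in `ℝ³`. -/
def OrthFrame (T : Fin 3 → ℝ) (N : Fin 3 → ℂ) : Prop :=
  (∑ i : Fin 3, (T i) ^ 2 = 1) ∧ (∑ i : Fin 3, (N i).re ^ 2 = 1) ∧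
  (∑ i : Fin 3, (N i).im ^ 2 = 1) ∧
  (∑ i : Fin 3, T i * (N i).re = 0) ∧ (∑ i : Fin 3, T i * (N i).im = 0) ∧
  (∑ i : Fin 3, (N i).re * (N i).im = 0)

variable {ι : Type*}

theorem HasDerivAt.pi_re {f : ℝ → ι → ℂ} {f' : ι → ℂ} {x : ℝ} (hf : HasDerivAt f f' x) :
    HasDerivAt (fun y i => (f y i).re) (fun i => (f' i).re) x :=
  hasDerivAt_pi.2 fun i => Complex.reCLM.hasFDerivAt.comp_hasDerivAt x (hasDerivAt_pi.1 hf i)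

theorem HasDerivAt.pi_im {f : ℝ → ι → ℂ} {f' : ι → ℂ} {x : ℝ} (hf : HasDerivAt f f' x) :
    HasDerivAt (fun y i => (f y i).im) (fun i => (f' i).im) x :=
  hasDerivAt_pi.2 fun i => Complex.imCLM.hasFDerivAt.comp_hasDerivAt x (hasDerivAt_pi.1 hf i)

variable [Fintype ι]

theorem HasDerivAt.dotProduct {u v : ℝ → ι → ℝ} {u' v' : ι → ℝ} {x : ℝ}
    (hu : HasDerivAt u u' x) (hv : HasDerivAt v v' x) :
    HasDerivAt (fun y => u y ⬝ᵥ v y) (u' ⬝ᵥ v x + u x ⬝ᵥ v') x := by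
  have := HasDerivAt.fun_sum fun i (_ : i ∈ Finset.univ) =>
    (hasDerivAt_pi.1 hu i).mul (hasDerivAt_pi.1 hv i)
  unfold _root_.dotProduct
  simpa only [Pi.mul_apply, Finset.sum_add_distrib] using this

/-- The squared Frobenius norm of `G - 1`, `G` the Gram matrix of `(t, r, s)`. -/
def frameDefect (t r s : ι → ℝ) : ℝ :=
  (t ⬝ᵥ t - 1) ^ 2 + (r ⬝ᵥ r - 1) ^ 2 + (s ⬝ᵥ s - 1) ^ 2 +
    2 * (t ⬝ᵥ r) ^ 2 + 2 * (t ⬝ᵥ s) ^ 2 + 2 * (r ⬝ᵥ s) ^ 2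

theorem frameDefect_eq_zero_iff {t r s : ι → ℝ} :
    frameDefect t r s = 0 ↔ t ⬝ᵥ t = 1 ∧ r ⬝ᵥ r = 1 ∧ s ⬝ᵥ s = 1 ∧
      t ⬝ᵥ r = 0 ∧ t ⬝ᵥ s = 0 ∧ r ⬝ᵥ s = 0 := by
  constructor
  · intro h
    unfold frameDefect at h
    refine ⟨?_, ?_, ?_, ?_, ?_, ?_⟩ <;>
      nlinarith [sq_nonneg (t ⬝ᵥ t - 1), sq_nonneg (r ⬝ᵥ r - 1), sq_nonneg (s ⬝ᵥ s - 1),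
        sq_nonneg (t ⬝ᵥ r), sq_nonneg (t ⬝ᵥ s), sq_nonneg (r ⬝ᵥ s)]
  · rintro ⟨htt, hrr, hss, htr, hts, hrs⟩
    simp [frameDefect, htt, hrr, hss, htr, hts, hrs]

theorem hasDerivAt_frameDefect_eq_zero {t r s : ℝ → ι → ℝ} {p q x : ℝ}
    (ht : HasDerivAt t (p • r x + q • s x) x) (hr : HasDerivAt r (-p • t x) x)
    (hs : HasDerivAt s (-q • t x) x) :
    HasDerivAt (fun y => frameDefect (t y) (r y) (s y)) 0 x := by
  have htt := ht.dotProduct ht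
  have hrr := hr.dotProduct hr
  have hss := hs.dotProduct hs
  have htr := ht.dotProduct hr
  have hts := ht.dotProduct hs
  have hrs := hr.dotProduct hs
  have := ((((((htt.sub_const 1).pow 2).add ((hrr.sub_const 1).pow 2)).add
    ((hss.sub_const 1).pow 2)).add ((htr.pow 2).const_mul 2)).add
    ((hts.pow 2).const_mul 2)).add ((hrs.pow 2).const_mul 2)
  refine this.congr_deriv ?_
  simp only [add_dotProduct, dotProduct_add, smul_dotProduct, dotProduct_smul, smul_eq_mul,
    dotProduct_comm (r x) (t x), dotProduct_comm (s x) (t x), dotProduct_comm (s x) (r x)]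
  ring

theorem orthFrame_iff_frameDefect_eq_zero {T : Fin 3 → ℝ} {N : Fin 3 → ℂ} :
    OrthFrame T N ↔ frameDefect T (fun i => (N i).re) (fun i => (N i).im) = 0 := by
  simp only [frameDefect_eq_zero_iff, OrthFrame, dotProduct, sq]

theorem stmt17_general (T : ℝ → Fin 3 → ℝ) (N : ℝ → Fin 3 → ℂ) (ψ : ℝ → ℂ)
    (hT : ∀ x : ℝ, HasDerivAt T (fun i => ((starRingEnd ℂ) (ψ x) * N x i).re) x)
    (hN : ∀ x : ℝ, HasDerivAt N (fun i => -(ψ x * ((T x i : ℝ) : ℂ))) x)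
    (x₀ : ℝ) (h0 : OrthFrame (T x₀) (N x₀)) :
    ∀ x : ℝ, OrthFrame (T x) (N x) := by
  have hT' : ∀ x, HasDerivAt T
      ((ψ x).re • (fun i => (N x i).re) + (ψ x).im • fun i => (N x i).im) x := fun x =>
    (hT x).congr_deriv (by ext i; simp [Complex.mul_re])
  have hRe : ∀ x, HasDerivAt (fun y i => (N y i).re) (-(ψ x).re • T x) x := fun x =>
    (hN x).pi_re.congr_deriv (by ext i; simp)
  have hIm : ∀ x, HasDerivAt (fun y i => (N y i).im) (-(ψ x).im • T x) x := fun x =>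
    (hN x).pi_im.congr_deriv (by ext i; simp)
  have hDefect : ∀ x, HasDerivAt
      (fun y => frameDefect (T y) (fun i => (N y i).re) (fun i => (N y i).im)) 0 x := fun x =>
    hasDerivAt_frameDefect_eq_zero (hT' x) (hRe x) (hIm x)
  intro x
  rw [orthFrame_iff_frameDefect_eq_zero] at h0 ⊢
  rwa [is_const_of_deriv_eq_zero (fun y => (hDefect y).differentiableAt)
    (fun y => (hDefect y).deriv) x x₀]

theorem stmt17 (T : ℝ → Fin 3 → ℝ) (N : ℝ → Fin 3 → ℂ) (ψ : ℝ → ℂ) (hψ : Continuous ψ)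
    (hT : ∀ x : ℝ, HasDerivAt T (fun i => ((starRingEnd ℂ) (ψ x) * N x i).re) x)
    (hN : ∀ x : ℝ, HasDerivAt N (fun i => -(ψ x * ((T x i : ℝ) : ℂ))) x)
    (x₀ : ℝ) (h0 : OrthFrame (T x₀) (N x₀)) :
    ∀ x : ℝ, OrthFrame (T x) (N x) :=
  stmt17_general T N ψ hT hN x₀ h0
end
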